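/- arXiv:1712.01052 — 2 statements merged into one kernel-verified Lean document; each statement's English description precedes it below -/
import Mathlib

section
/- For every n ∈ ℕ, every invariant length function ℓ on the symmetric group Sym(n) satisfies ℓ(σ^k) ≤ 3ℓ(σ) for every σ ∈ Sym(n) and every k ∈ ℤ. -/
/-!
Raising `σ ∈ Sym(n)` to a power `x` coprime to its order does not change its cycle type, so
`σ ^ x` is conjugate to `σ` and has the same length. For any `N ≠ 0`, every even integer is a sum
of two integers coprime to `N` (prime by prime, `1` or `-1` works for the first summand; the
Chinese remainder theorem glues the choices). Hence `ℓ (σ ^ k) ≤ 2 ℓ σ` for even `k`, and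
`σ ^ k = σ ^ (k - 1) * σ` gives `3 ℓ σ` for odd `k`.
-/

namespace Int

theorem exists_isCoprime_sub_isCoprime_prime_pow {p : ℕ} (hp : p.Prime) (e : ℕ) {k : ℤ}
    (hk : Even k) : ∃ x : ℤ, IsCoprime x (p ^ e : ℕ) ∧ IsCoprime (k - x) (p ^ e : ℕ) := by
  have hpZ : Prime (p : ℤ) := Nat.prime_iff_prime_int.mp hp
  suffices ∃ x : ℤ, IsCoprime x (p ^ e : ℕ) ∧ ¬ (p : ℤ) ∣ k - x by
    obtain ⟨x, hx, hkx⟩ := this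
    refine ⟨x, hx, ?_⟩
    push_cast
    exact (hpZ.coprime_iff_not_dvd.mpr hkx).symm.pow_right
  by_cases hk1 : (p : ℤ) ∣ k - 1
  · refine ⟨-1, isCoprime_one_left.neg_left, fun hk2 => ?_⟩
    have hp2 : (p : ℤ) ∣ 2 := by simpa using dvd_sub hk2 hk1
    obtain rfl : p = 2 := (Nat.prime_dvd_prime_iff_eq hp Nat.prime_two).mp (by exact_mod_cast hp2)
    have h21 : (2 : ℤ) ∣ 1 := by simpa using dvd_sub (even_iff_two_dvd.mp hk) hk1
    norm_num at h21
  · exact ⟨1, isCoprime_one_left, hk1⟩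

theorem exists_isCoprime_sub_isCoprime_mul {a b : ℕ} (hab : a.Coprime b) {k : ℤ}
    (ha : ∃ x : ℤ, IsCoprime x a ∧ IsCoprime (k - x) a)
    (hb : ∃ x : ℤ, IsCoprime x b ∧ IsCoprime (k - x) b) :
    ∃ x : ℤ, IsCoprime x (a * b : ℕ) ∧ IsCoprime (k - x) (a * b : ℕ) := by
  obtain ⟨x₁, hx₁, hkx₁⟩ := ha
  obtain ⟨x₂, hx₂, hkx₂⟩ := hb
  obtain ⟨u, v, huv⟩ := Nat.isCoprime_iff_coprime.mpr hab
  -- `x ≡ x₁ [ZMOD a]` and `x ≡ x₂ [ZMOD b]`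
  obtain ⟨x, hxa⟩ : ∃ x : ℤ, x = x₁ + a * (u * (x₂ - x₁)) := ⟨_, rfl⟩
  have hxb : x = x₂ + b * (-v * (x₂ - x₁)) := by linear_combination hxa + (x₂ - x₁) * huv
  have hkxa : k - x = k - x₁ + a * -(u * (x₂ - x₁)) := by linear_combination -hxa
  have hkxb : k - x = k - x₂ + b * (v * (x₂ - x₁)) := by linear_combination -hxa + (x₁ - x₂) * huv
  refine ⟨x, ?_, ?_⟩ <;> push_cast
  · exact (hxa ▸ hx₁.add_mul_left_left _).mul_right (hxb ▸ hx₂.add_mul_left_left _)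
  · exact (hkxa ▸ hkx₁.add_mul_left_left _).mul_right (hkxb ▸ hkx₂.add_mul_left_left _)

theorem exists_isCoprime_sub_isCoprime {N : ℕ} (hN : N ≠ 0) {k : ℤ} (hk : Even k) :
    ∃ x : ℤ, IsCoprime x N ∧ IsCoprime (k - x) N := by
  induction N using Nat.recOnPrimeCoprime with
  | zero => exact absurd rfl hN
  | prime_pow p e hp => exact exists_isCoprime_sub_isCoprime_prime_pow hp e hk
  | coprime a b ha hb hab iha ihb =>
    exact exists_isCoprime_sub_isCoprime_mul hab (iha (by omega)) (ihb (by omega))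

end Int

namespace Equiv.Perm

variable {α : Type*} [Fintype α] [DecidableEq α]

theorem cycleType_pow_of_coprime (σ : Perm α) {t : ℕ} (ht : t.Coprime (orderOf σ)) :
    (σ ^ t).cycleType = σ.cycleType := by
  induction σ using cycle_induction_on with
  | base_one => simp
  | base_cycles c hc =>
    rw [(hc.pow_iff.mpr ht).cycleType, hc.cycleType, support_pow_coprime ht]
  | induction_disjoint f g hfg _ ihf ihg =>
    rw [hfg.orderOf] at ht
    rw [hfg.commute.mul_pow, (hfg.pow_disjoint_pow t t).cycleType_mul, hfg.cycleType_mul,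
      ihf (ht.coprime_dvd_right (Nat.dvd_lcm_left _ _)),
      ihg (ht.coprime_dvd_right (Nat.dvd_lcm_right _ _))]

theorem isConj_zpow_of_isCoprime (σ : Perm α) {x : ℤ} (hx : IsCoprime x (orderOf σ)) :
    IsConj σ (σ ^ x) := by
  have hN : (orderOf σ : ℤ) ≠ 0 := by exact_mod_cast (isOfFinOrder_of_finite σ).orderOf_pos.ne'
  obtain ⟨t, ht⟩ := Int.eq_ofNat_of_zero_le (Int.emod_nonneg x hN)
  have hcop : t.Coprime (orderOf σ) := by
    rw [← Nat.isCoprime_iff_coprime, ← ht, Int.emod_def, sub_eq_add_neg, ← mul_neg]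
    exact hx.add_mul_left_left _
  rw [← zpow_mod_orderOf, ht, zpow_natCast, isConj_iff_cycleType_eq,
    cycleType_pow_of_coprime σ hcop]

end Equiv.Perm

section LengthFunction

variable {G : Type*} [Group G]

theorem length_zpow_le_two_mul_of_even (ℓ : G → ℝ) (hsub : ∀ a b, ℓ (a * b) ≤ ℓ a + ℓ b)
    (hconj : ∀ a b, ℓ (b * a * b⁻¹) = ℓ a) {g : G} (hg : orderOf g ≠ 0)
    (hcop : ∀ x : ℤ, IsCoprime x (orderOf g) → IsConj g (g ^ x)) {k : ℤ} (hk : Even k) :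
    ℓ (g ^ k) ≤ 2 * ℓ g := by
  have hℓ : ∀ x : ℤ, IsCoprime x (orderOf g) → ℓ (g ^ x) = ℓ g := fun x hx => by
    obtain ⟨c, hc⟩ := isConj_iff.mp (hcop x hx)
    rw [← hc, hconj]
  obtain ⟨x, hx, hkx⟩ := Int.exists_isCoprime_sub_isCoprime hg hk
  calc ℓ (g ^ k) = ℓ (g ^ x * g ^ (k - x)) := by rw [← zpow_add, add_sub_cancel]
    _ ≤ ℓ (g ^ x) + ℓ (g ^ (k - x)) := hsub _ _
    _ = 2 * ℓ g := by rw [hℓ x hx, hℓ _ hkx, two_mul]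

theorem length_zpow_le_three_mul (ℓ : G → ℝ) (hnonneg : ∀ a, 0 ≤ ℓ a)
    (hsub : ∀ a b, ℓ (a * b) ≤ ℓ a + ℓ b) (hconj : ∀ a b, ℓ (b * a * b⁻¹) = ℓ a) {g : G}
    (hg : orderOf g ≠ 0) (hcop : ∀ x : ℤ, IsCoprime x (orderOf g) → IsConj g (g ^ x)) (k : ℤ) :
    ℓ (g ^ k) ≤ 3 * ℓ g := by
  rcases Int.even_or_odd k with hk | hk
  · linarith [length_zpow_le_two_mul_of_even ℓ hsub hconj hg hcop hk, hnonneg g]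
  · calc ℓ (g ^ k) = ℓ (g ^ (k - 1) * g) := by rw [← zpow_add_one, sub_add_cancel]
      _ ≤ ℓ (g ^ (k - 1)) + ℓ g := hsub _ _
      _ ≤ 3 * ℓ g := by
        linarith [length_zpow_le_two_mul_of_even ℓ hsub hconj hg hcop (hk.sub_odd odd_one)]

end LengthFunction

theorem invariant_length_pow_le_three_mul_general
    (n : ℕ) (ℓ : Equiv.Perm (Fin n) → ℝ)
    (hnonneg : ∀ σ, 0 ≤ ℓ σ)
    (hsub : ∀ σ τ, ℓ (σ * τ) ≤ ℓ σ + ℓ τ)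
    (hconj : ∀ σ τ, ℓ (τ * σ * τ⁻¹) = ℓ σ) :
    ∀ (σ : Equiv.Perm (Fin n)) (k : ℤ), ℓ (σ ^ k) ≤ 3 * ℓ σ := fun σ =>
  length_zpow_le_three_mul ℓ hnonneg hsub hconj (isOfFinOrder_of_finite σ).orderOf_pos.ne'
    fun _ hx => σ.isConj_zpow_of_isCoprime hx

/-- Every invariant length function `ℓ` on the symmetric group `Sym(n)` satisfies
`ℓ(σᵏ) ≤ 3 ℓ(σ)` for all `σ` and all `k ∈ ℤ`. -/
theorem invariant_length_pow_le_three_mul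
    (n : ℕ) (ℓ : Equiv.Perm (Fin n) → ℝ)
    (hnonneg : ∀ σ, 0 ≤ ℓ σ)
    (hzero : ∀ σ, ℓ σ = 0 ↔ σ = 1)
    (hinv : ∀ σ, ℓ σ⁻¹ = ℓ σ)
    (hsub : ∀ σ τ, ℓ (σ * τ) ≤ ℓ σ + ℓ τ)
    (hconj : ∀ σ τ, ℓ (τ * σ * τ⁻¹) = ℓ σ) :
    ∀ (σ : Equiv.Perm (Fin n)) (k : ℤ), ℓ (σ ^ k) ≤ 3 * ℓ σ :=
  invariant_length_pow_le_three_mul_general n ℓ hnonneg hsub hconj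
end

section
/- For every k ∈ ℕ and every ε > 0, there exists a non-trivial element w of the free group F₂ on two generators such that ‖w(a,b) − 1‖ < ε for all a,b ∈ SU(k), where w(a,b) denotes the evaluation of the word w at a and b and ‖·‖ is the operator norm on k×k complex matrices. -/
/-- The special unitary group `SU(k)`, realized as the subgroup of the unitary group
`U(k) = unitaryGroup (Fin k) ℂ` consisting of the matrices of determinant `1`. -/
def SU (k : ℕ) : Subgroup (Matrix.unitaryGroup (Fin k) ℂ) where
  carrier := {A | (A : Matrix (Fin k) (Fin k) ℂ).det = 1}
  one_mem' := by simp
  mul_mem' := by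
    intro a b ha hb
    simp only [Set.mem_setOf_eq, Matrix.UnitaryGroup.mul_val, Matrix.det_mul] at *
    rw [ha, hb, mul_one]
  inv_mem' := by
    intro a ha
    simp only [Set.mem_setOf_eq, Matrix.UnitaryGroup.inv_val] at *
    rw [Matrix.star_eq_conjTranspose, Matrix.det_conjTranspose, ha, star_one]

/-- The `ℓ² → ℓ²` operator norm of a complex `k × k` matrix. -/
noncomputable def opNorm {k : ℕ} (A : Matrix (Fin k) (Fin k) ℂ) : ℝ :=
  ‖Matrix.toEuclideanCLM (𝕜 := ℂ) A‖

/-!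
Write `x = of 0`, `y = of 1` and let `w₀ = y x y⁻¹`, `w_{j+1} = y ⁅w_j, ⁅x^{j+1}, w_j⁆⁆ y⁻¹`.
The reduced word of every `w_j` begins with `y` and ends with `y⁻¹`, so `w_j ≠ 1`.

For unitaries `s, t` of a C⋆-ring, `‖⁅s, t⁆ - 1‖ = ‖st - ts‖`, which is at most
`2 ‖s - 1‖ ‖t - 1‖` and at most `2 min (‖s - 1‖, ‖t - 1‖)`. Since `U(k)` is compact, a pigeonhole
argument gives `N` such that every `a ∈ U(k)` has a power `a^n`, `1 ≤ n ≤ N`, with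
`‖a^n - 1‖ ≤ δ`. At stage `n` the inner commutator `⁅a^n, ·⁆` then forces
`‖w_n(a, b) - 1‖ ≤ 4δ`, and from there on the error evolves as `e ↦ 4e²`, so for `δ ≤ 1/16`
it stays below `4δ` up to `w_N`, whatever `a` and `b` are.
-/

open scoped commutatorElement

section FreeGroupWords

open FreeGroup

theorem FreeGroup.toWord_list_prod {α : Type*} [DecidableEq α] {gs : List (FreeGroup α)}
    (h : IsReduced (gs.map toWord).flatten) : gs.prod.toWord = (gs.map toWord).flatten := by
  suffices gs.prod = mk (gs.map toWord).flatten by rw [this, toWord_mk, h.reduce_eq]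
  clear h
  induction gs with
  | nil => rfl
  | cons g gs ih => rw [List.prod_cons, ih, List.map_cons, List.flatten_cons, ← mul_mk, mk_toWord]

theorem FreeGroup.toWord_inv_head? {α : Type*} [DecidableEq α] (g : FreeGroup α) :
    g⁻¹.toWord.head? = g.toWord.getLast?.map fun a => (a.1, !a.2) := by
  rw [toWord_inv, invRev, List.head?_reverse, List.getLast?_map]

theorem FreeGroup.toWord_inv_getLast? {α : Type*} [DecidableEq α] (g : FreeGroup α) :
    g⁻¹.toWord.getLast? = g.toWord.head?.map fun a => (a.1, !a.2) := by
  rw [toWord_inv, invRev, List.getLast?_reverse, List.head?_map]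

def IsYFramed (g : FreeGroup (Fin 2)) : Prop :=
  g.toWord.head? = some (1, true) ∧ g.toWord.getLast? = some (1, false)

theorem IsYFramed.inv {g : FreeGroup (Fin 2)} (hg : IsYFramed g) : IsYFramed g⁻¹ := by
  rw [IsYFramed, toWord_inv_head?, toWord_inv_getLast?, hg.1, hg.2]
  exact ⟨rfl, rfl⟩

theorem IsYFramed.ne_one {g : FreeGroup (Fin 2)} (hg : IsYFramed g) : g ≠ 1 := by
  rintro rfl
  simp [IsYFramed] at hg

/-- Adjacent factors of `y g h g h⁻¹ g⁻¹ h g⁻¹ h⁻¹ y⁻¹` (with `h = x^m`) never cancel: at every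
junction the generators differ or the letters agree, so the reduced word is the concatenation. -/
theorem IsYFramed.conj_commutator {g : FreeGroup (Fin 2)} (hg : IsYFramed g) {m : ℕ}
    (hm : m ≠ 0) : IsYFramed (of 1 * ⁅g, ⁅of (0 : Fin 2) ^ m, g⁆⁆ * (of 1)⁻¹) := by
  set h : FreeGroup (Fin 2) := of 0 ^ m
  have hexp : of 1 * ⁅g, ⁅h, g⁆⁆ * (of 1)⁻¹ =
      [of 1, g, h, g, h⁻¹, g⁻¹, h, g⁻¹, h⁻¹, (of 1)⁻¹].prod := by
    simp only [commutatorElement_def, List.prod_cons, List.prod_nil]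
    group
  have hh : h.toWord = List.replicate m (0, true) := toWord_of_pow 0 _
  have hh1 : h ≠ 1 := by simpa [h] using hm
  have hhh : h.toWord.head? = some (0, true) := by simp [hh, List.head?_replicate, hm]
  have hhl : h.toWord.getLast? = some (0, true) := by simp [hh, List.getLast?_replicate, hm]
  have hy : (of (1 : Fin 2)).toWord = [(1, true)] := toWord_of 1
  obtain ⟨hgih, hgil⟩ := hg.inv
  have hg1 := hg.ne_one
  obtain ⟨hgh, hgl⟩ := hg
  rw [hexp, IsYFramed, toWord_list_prod]
  · simp [-toWord_inv, hy, toWord_inv_getLast?, List.getLast?_cons, List.getLast?_append, hhl,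
      hhh]
  rw [FreeGroup.IsReduced, List.isChain_flatten]
  · refine ⟨List.forall_mem_map.2 fun x _ => isReduced_toWord, ?_⟩
    simp [-toWord_inv, hy, toWord_inv_head?, toWord_inv_getLast?, hhh, hhl, hgh, hgl, hgih, hgil]
  · simp [-toWord_inv, hg1, hh1]

def almostLawWord : ℕ → FreeGroup (Fin 2)
  | 0 => of 1 * of 0 * (of 1)⁻¹
  | j + 1 => of 1 * ⁅almostLawWord j, ⁅of (0 : Fin 2) ^ (j + 1), almostLawWord j⁆⁆ * (of 1)⁻¹

theorem isYFramed_almostLawWord : ∀ j, IsYFramed (almostLawWord j)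
  | 0 => ⟨rfl, rfl⟩
  | j + 1 => (isYFramed_almostLawWord j).conj_commutator j.succ_ne_zero

end FreeGroupWords

theorem TotallyBounded.exists_dist_lt {α : Type*} [PseudoMetricSpace α] {s : Set α}
    (hs : TotallyBounded s) {δ : ℝ} (hδ : 0 < δ) :
    ∃ N : ℕ, ∀ f : ℕ → α, (∀ n, f n ∈ s) → ∃ i j, i < j ∧ j ≤ N ∧ dist (f i) (f j) < δ := by
  obtain ⟨t, ht, hst⟩ := Metric.totallyBounded_iff.mp hs (δ / 2) (half_pos hδ)
  have hcenter : ∀ x ∈ s, ∃ c ∈ ht.toFinset, dist x c < δ / 2 := by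
    intro x hx
    obtain ⟨c, hc, hxc⟩ := Set.mem_iUnion₂.mp (hst hx)
    exact ⟨c, ht.mem_toFinset.mpr hc, hxc⟩
  choose! center hcenter_mem hcenter_dist using hcenter
  refine ⟨ht.toFinset.card, fun f hf => ?_⟩
  obtain ⟨i, hi, j, hj, hij, hcij⟩ := Finset.exists_ne_map_eq_of_card_lt_of_maps_to
    (s := Finset.range (ht.toFinset.card + 1)) (f := center ∘ f) (by simp)
    (fun n _ => hcenter_mem _ (hf n))
  have hdist : ∀ i j, center (f i) = center (f j) → dist (f i) (f j) < δ := fun i j hc =>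
    calc dist (f i) (f j) ≤ dist (f i) (center (f j)) + dist (f j) (center (f j)) :=
          dist_triangle_right _ _ _
      _ < δ / 2 + δ / 2 := add_lt_add (hc ▸ hcenter_dist _ (hf i)) (hcenter_dist _ (hf j))
      _ = δ := add_halves δ
  rw [Finset.mem_range, Nat.lt_succ_iff] at hi hj
  rcases hij.lt_or_gt with h | h
  · exact ⟨i, j, h, hj, hdist _ _ hcij⟩
  · exact ⟨j, i, h, hi, hdist _ _ hcij.symm⟩

theorem norm_mul_sub_mul_le_norm_sub_one_mul {R : Type*} [NormedRing R] (x y : R) :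
    ‖x * y - y * x‖ ≤ 2 * ‖x - 1‖ * ‖y - 1‖ :=
  calc ‖x * y - y * x‖ = ‖(x - 1) * (y - 1) - (y - 1) * (x - 1)‖ := by congr 1; noncomm_ring
    _ ≤ ‖x - 1‖ * ‖y - 1‖ + ‖y - 1‖ * ‖x - 1‖ :=
      (norm_sub_le _ _).trans (add_le_add (norm_mul_le _ _) (norm_mul_le _ _))
    _ = 2 * ‖x - 1‖ * ‖y - 1‖ := by ring

namespace Unitary

variable {A : Type*} [NormedRing A] [StarRing A] [CStarRing A]

theorem norm_mul_sub_mul_le_norm_sub_one (x : A) (u : unitary A) :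
    ‖x * u - u * x‖ ≤ 2 * ‖x - 1‖ :=
  calc ‖x * u - u * x‖ = ‖(x - 1) * u - u * (x - 1)‖ := by congr 1; noncomm_ring
    _ ≤ ‖(x - 1) * u‖ + ‖u * (x - 1)‖ := norm_sub_le _ _
    _ = 2 * ‖x - 1‖ := by
      rw [CStarRing.norm_mul_coe_unitary, CStarRing.norm_coe_unitary_mul]
      ring

theorem norm_commutatorElement_sub_one (s t : unitary A) :
    ‖((⁅s, t⁆ : unitary A) : A) - 1‖ = ‖(s : A) * t - t * s‖ := by
  have hts : ((t * s * s⁻¹ * t⁻¹ : unitary A) : A) = 1 := by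
    rw [mul_inv_cancel_right, mul_inv_cancel, OneMemClass.coe_one]
  have h : ((⁅s, t⁆ : unitary A) : A) - 1 =
      ((s : A) * t - t * s) * (s⁻¹ : unitary A) * (t⁻¹ : unitary A) := by
    rw [sub_mul, sub_mul, ← hts]
    rfl
  rw [h, CStarRing.norm_mul_coe_unitary, CStarRing.norm_mul_coe_unitary]

theorem norm_conj_sub_one (g t : unitary A) :
    ‖((g * t * g⁻¹ : unitary A) : A) - 1‖ = ‖(t : A) - 1‖ := by
  have hg : ((g * g⁻¹ : unitary A) : A) = 1 := by rw [mul_inv_cancel, OneMemClass.coe_one]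
  have h : ((g * t * g⁻¹ : unitary A) : A) - 1 = g * ((t : A) - 1) * (g⁻¹ : unitary A) := by
    rw [mul_sub, sub_mul, mul_one, ← hg]
    rfl
  rw [h, CStarRing.norm_mul_coe_unitary, CStarRing.norm_coe_unitary_mul]

theorem norm_commutatorElement_sub_one_le_mul (s t : unitary A) :
    ‖((⁅s, t⁆ : unitary A) : A) - 1‖ ≤ 2 * ‖(s : A) - 1‖ * ‖(t : A) - 1‖ :=
  (norm_commutatorElement_sub_one s t).trans_le (norm_mul_sub_mul_le_norm_sub_one_mul _ _)

theorem norm_commutatorElement_sub_one_le_left (s t : unitary A) :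
    ‖((⁅s, t⁆ : unitary A) : A) - 1‖ ≤ 2 * ‖(s : A) - 1‖ :=
  (norm_commutatorElement_sub_one s t).trans_le (norm_mul_sub_mul_le_norm_sub_one _ _)

theorem norm_commutatorElement_sub_one_le_right (s t : unitary A) :
    ‖((⁅s, t⁆ : unitary A) : A) - 1‖ ≤ 2 * ‖(t : A) - 1‖ := by
  rw [norm_commutatorElement_sub_one, norm_sub_rev]
  exact norm_mul_sub_mul_le_norm_sub_one _ _

theorem exists_pow_norm_sub_one_lt [ProperSpace A] {δ : ℝ} (hδ : 0 < δ) :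
    ∃ N : ℕ, ∀ u : unitary A, ∃ n, n ≠ 0 ∧ n ≤ N ∧ ‖((u ^ n : unitary A) : A) - 1‖ < δ := by
  obtain ⟨N, hN⟩ := (isCompact_closedBall (0 : A) ‖(1 : A)‖).totallyBounded.exists_dist_lt hδ
  refine ⟨N, fun u => ?_⟩
  obtain ⟨i, j, hij, hjN, hdist⟩ := hN (fun n => ((u ^ n : unitary A) : A)) fun n => by
    rw [Metric.mem_closedBall, dist_zero_right, ← mul_one ((u ^ n : unitary A) : A),
      CStarRing.norm_coe_unitary_mul]
  refine ⟨j - i, by omega, by omega, ?_⟩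
  have hj : ((u ^ j : unitary A) : A) = (u ^ i : unitary A) * (u ^ (j - i) : unitary A) := by
    rw [← Submonoid.coe_mul, ← pow_add, Nat.add_sub_cancel' hij.le]
  rwa [← CStarRing.norm_coe_unitary_mul (u ^ i), mul_sub, mul_one, ← hj, ← dist_eq_norm,
    dist_comm]

theorem norm_lift_almostLawWord_sub_one_le (f : Fin 2 → unitary A) {n N : ℕ} (hn : n ≠ 0)
    (hnN : n ≤ N) {δ : ℝ} (hf : ‖((f 0 ^ n : unitary A) : A) - 1‖ ≤ δ) (hδ : 16 * δ ≤ 1) :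
    ‖(FreeGroup.lift f (almostLawWord N) : A) - 1‖ ≤ 4 * δ := by
  set T : ℕ → unitary A := fun j => FreeGroup.lift f (almostLawWord j)
  have hT (j : ℕ) :
      ‖(T (j + 1) : A) - 1‖ = ‖((⁅T j, ⁅f 0 ^ (j + 1), T j⁆⁆ : unitary A) : A) - 1‖ := by
    simp only [T]
    rw [almostLawWord, map_mul, map_mul, map_inv, map_commutatorElement, map_commutatorElement,
      map_pow, FreeGroup.lift_apply_of, FreeGroup.lift_apply_of]
    exact norm_conj_sub_one _ _
  change ‖(T N : A) - 1‖ ≤ 4 * δ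
  induction N, hnN using Nat.le_induction with
  | base =>
    obtain ⟨m, rfl⟩ := Nat.exists_eq_succ_of_ne_zero hn
    calc ‖(T (m + 1) : A) - 1‖ ≤ 2 * (2 * ‖((f 0 ^ (m + 1) : unitary A) : A) - 1‖) := by
          rw [hT]
          exact (norm_commutatorElement_sub_one_le_right _ _).trans
            (mul_le_mul_of_nonneg_left (norm_commutatorElement_sub_one_le_left _ _) zero_le_two)
      _ ≤ 4 * δ := by linarith
  | succ N _ ih =>
    have h0 := norm_nonneg ((T N : A) - 1)
    calc ‖(T (N + 1) : A) - 1‖ ≤ 2 * ‖(T N : A) - 1‖ * (2 * ‖(T N : A) - 1‖) := by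
          rw [hT]
          exact (norm_commutatorElement_sub_one_le_mul _ _).trans <|
            mul_le_mul_of_nonneg_left (norm_commutatorElement_sub_one_le_right _ _) (by positivity)
      _ ≤ 4 * δ := by nlinarith

end Unitary

theorem Subgroup.coe_freeGroupLift {G ι : Type*} [Group G] (H : Subgroup G) (f : ι → H)
    (w : FreeGroup ι) : ((FreeGroup.lift f w : H) : G) = FreeGroup.lift (fun i => (f i : G)) w :=
  FreeGroup.lift_unique (H.subtype.comp (FreeGroup.lift f)) fun i => by simp

open scoped Matrix.Norms.L2Operator in
/-- For every `k` and every `ε > 0` there is a non-trivial word `w ∈ F₂` such that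
`‖w(a,b) - 1‖ < ε` (in operator norm) for all `a, b ∈ SU(k)`. -/
theorem exists_word_almost_law_on_SU
    (k : ℕ) (ε : ℝ) (hε : 0 < ε) :
    ∃ w : FreeGroup (Fin 2), w ≠ 1 ∧
      ∀ a b : SU k,
        opNorm (((FreeGroup.lift ![a, b] w : SU k) :
          Matrix (Fin k) (Fin k) ℂ) - 1) < ε := by
  have : ProperSpace (Matrix (Fin k) (Fin k) ℂ) := FiniteDimensional.proper ℂ _
  set δ := min (ε / 8) (1 / 16)
  obtain ⟨N, hN⟩ := Unitary.exists_pow_norm_sub_one_lt (A := Matrix (Fin k) (Fin k) ℂ)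
    (δ := δ) (by positivity)
  refine ⟨almostLawWord N, (isYFramed_almostLawWord N).ne_one, fun a b => ?_⟩
  obtain ⟨n, hn, hnN, ha⟩ := hN a
  have hab := Unitary.norm_lift_almostLawWord_sub_one_le
    (fun i => (![a, b] i : Matrix.unitaryGroup (Fin k) ℂ)) hn hnN ha.le
    (by linarith [min_le_right (ε / 8) (1 / 16)])
  change ‖(((FreeGroup.lift ![a, b] (almostLawWord N) : SU k) : Matrix.unitaryGroup (Fin k) ℂ) :
    Matrix (Fin k) (Fin k) ℂ) - 1‖ < ε
  rw [Subgroup.coe_freeGroupLift]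
  linarith [min_le_left (ε / 8) (1 / 16)]
end
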